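/- The state space of the hypergraph H₄(19) — atoms {1,...,19} with blocks {1,2,3}, {1,4,5}, {1,6,7}, {2,8,9}, {2,10,11}, {3,12,13}, {3,14,15}, {4,8,12}, {4,10,14}, {5,9,13}, {5,11,16}, {6,8,15}, {6,11,17}, {7,9,18}, {7,10,19}, {12,16,18}, {13,17,19}, {14,17,18}, {15,16,19} — is affinely parametrized by (x,y) = (s(6), s(8)) ranging over the parallelogram {(x,y) : 0 ≤ x ≤ 2/3, 1/6 ≤ y ≤ 1/2, 1/2 ≤ x+y ≤ 5/6}; in particular it has exactly 4 extreme points: (0,1/2), (1/3,1/6), (2/3,1/6), (1/3,1/2). -/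

import Mathlib

/-- The 19 blocks of the hypergraph H₄(19) on atoms {1,...,19}. -/
def H4Blocks : Finset (Finset ℕ) :=
  { {1,2,3}, {1,4,5}, {1,6,7}, {2,8,9}, {2,10,11}, {3,12,13}, {3,14,15},
    {4,8,12}, {4,10,14}, {5,9,13}, {5,11,16}, {6,8,15}, {6,11,17},
    {7,9,18}, {7,10,19}, {12,16,18}, {13,17,19}, {14,17,18}, {15,16,19} }

/-- A state on H₄(19): nonnegative on the atoms, summing to 1 on every block. -/
def H4IsState (s : ℕ → ℝ) : Prop :=
  (∀ a ∈ Finset.Icc 1 19, 0 ≤ s a) ∧ ∀ b ∈ H4Blocks, ∑ a ∈ b, s a = 1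

/-- The state of H₄(19) with parameters `x = s 6`, `y = s 8`, via the explicit affine
formulas of the paper. -/
noncomputable def H4StateOf (x y : ℝ) : ℕ → ℝ := fun a =>
  if a = 1 then 2*y - 1/3
  else if a = 2 then 1 - 2*y
  else if a = 3 ∨ a = 12 ∨ a = 13 then 1/3
  else if a = 4 ∨ a = 5 then 2/3 - y
  else if a = 6 then x
  else if a = 7 then 4/3 - x - 2*y
  else if a = 8 ∨ a = 9 then y
  else if a = 10 then 2/3 - x
  else if a = 11 then x + 2*y - 2/3
  else if a = 14 ∨ a = 18 then x + y - 1/3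
  else if a = 15 ∨ a = 16 then 1 - x - y
  else if a = 17 then 5/3 - 2*x - 2*y
  else 2*x + 2*y - 1

/-- The parallelogram {0 ≤ x ≤ 2/3, 1/6 ≤ y ≤ 1/2, 1/2 ≤ x+y ≤ 5/6}. -/
def H4Par : Set (ℝ × ℝ) :=
  {p | 0 ≤ p.1 ∧ p.1 ≤ 2/3 ∧ 1/6 ≤ p.2 ∧ p.2 ≤ 1/2 ∧
       1/2 ≤ p.1 + p.2 ∧ p.1 + p.2 ≤ 5/6}

/-!
The 19 block equations have rank 17 on the 19 atoms, so every state is the affine function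
`H4StateOf` of `(s 6, s 8)`. Among the nineteen nonnegativity conditions of `H4StateOf x y`,
those of atoms 6, 10, 1, 2, 19, 17 are exactly the six inequalities of `H4Par`, and the others
follow from them. The parallelogram is the convex hull of its four vertices, and each vertex is
exposed by a linear functional, hence extreme.
-/

theorem eq_h4StateOf_of_forall_sum_eq_one {s : ℕ → ℝ} (h : ∀ b ∈ H4Blocks, ∑ a ∈ b, s a = 1) :
    ∀ a ∈ Finset.Icc 1 19, s a = H4StateOf (s 6) (s 8) a := by
  simp only [H4Blocks, Finset.mem_insert, Finset.mem_singleton, forall_eq_or_imp,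
    OfNat.one_ne_ofNat, or_self, not_false_eq_true, Finset.sum_insert, Nat.reduceEqDiff,
    Finset.sum_singleton, forall_eq] at h
  obtain ⟨e1, e2, e3, e4, e5, e6, e7, e8, e9, e10, e11, e12, e13, e14, e15, e16, e17, e18, e19⟩ :=
    h
  intro a ha
  obtain ⟨ha1, ha19⟩ := Finset.mem_Icc.1 ha
  interval_cases a <;> simp [H4StateOf] <;> linarith

theorem sum_h4StateOf_eq_one (x y : ℝ) : ∀ b ∈ H4Blocks, ∑ a ∈ b, H4StateOf x y a = 1 := by
  simp only [H4Blocks, Finset.mem_insert, Finset.mem_singleton, forall_eq_or_imp,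
    OfNat.one_ne_ofNat, or_self, not_false_eq_true, Finset.sum_insert, Nat.reduceEqDiff,
    Finset.sum_singleton, forall_eq]
  and_intros <;> norm_num [H4StateOf] <;> ring

theorem h4StateOf_nonneg_iff {x y : ℝ} :
    (∀ a ∈ Finset.Icc 1 19, 0 ≤ H4StateOf x y a) ↔ (x, y) ∈ H4Par := by
  constructor
  · intro h
    have h1 := h 1 (by decide)
    have h2 := h 2 (by decide)
    have h6 := h 6 (by decide)
    have h10 := h 10 (by decide)
    have h17 := h 17 (by decide)
    have h19 := h 19 (by decide)
    norm_num [H4StateOf] at h1 h2 h6 h10 h17 h19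
    refine ⟨?_, ?_, ?_, ?_, ?_, ?_⟩ <;> dsimp only <;> linarith
  · rintro ⟨hx0, hx1, hy0, hy1, hxy0, hxy1⟩ a ha
    obtain ⟨ha1, ha19⟩ := Finset.mem_Icc.1 ha
    interval_cases a <;> simp [H4StateOf] <;> linarith

theorem h4IsState_h4StateOf_iff {x y : ℝ} : H4IsState (H4StateOf x y) ↔ (x, y) ∈ H4Par :=
  ⟨fun h => h4StateOf_nonneg_iff.1 h.1,
    fun h => ⟨h4StateOf_nonneg_iff.2 h, sum_h4StateOf_eq_one x y⟩⟩

theorem convex_h4Par : Convex ℝ H4Par := by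
  rintro ⟨x, y⟩ ⟨hx0, hx1, hy0, hy1, hxy0, hxy1⟩ ⟨x', y'⟩ ⟨hx0', hx1', hy0', hy1', hxy0', hxy1'⟩
    a b ha hb hab
  simp only [H4Par, Set.mem_ofPred_eq, Prod.smul_mk, Prod.mk_add_mk, smul_eq_mul]
  refine ⟨?_, ?_, ?_, ?_, ?_, ?_⟩ <;> nlinarith

theorem h4Par_eq_convexHull :
    H4Par = convexHull ℝ {(0, 1/2), (1/3, 1/6), (2/3, 1/6), (1/3, 1/2)} := by
  refine (convexHull_min ?_ convex_h4Par).antisymm' ?_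
  · rintro q (rfl | rfl | rfl | rfl | rfl) <;> norm_num [H4Par]
  rintro ⟨x, y⟩ ⟨hx0, hx1, hy0, hy1, hxy0, hxy1⟩
  dsimp only at *
  -- `(u, v) ∈ [0, 1]²` are the affine coordinates of `(x, y)` along the edges from `(0, 1/2)`,
  -- and the bilinear weights write `(x, y)` as a convex combination of the four vertices.
  set u : ℝ := 3/2 - 3*y with hu
  set v : ℝ := 3*x + 3*y - 3/2 with hv
  have hu0 : 0 ≤ u := by linarith
  have hu1 : 0 ≤ 1 - u := by linarith
  have hv0 : 0 ≤ v := by linarith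
  have hv1 : 0 ≤ 1 - v := by linarith
  let w : Fin 4 → ℝ := ![(1-u)*(1-v), u*(1-v), u*v, (1-u)*v]
  let z : Fin 4 → ℝ × ℝ := ![(0, 1/2), (1/3, 1/6), (2/3, 1/6), (1/3, 1/2)]
  have hw : ∑ i, w i = 1 := by
    simp only [Fin.sum_univ_four, Matrix.cons_val_zero, Matrix.cons_val_one, Matrix.cons_val, w]
    ring
  suffices hcm : Finset.univ.centerMass w z = (x, y) by
    rw [← hcm]
    exact Finset.univ.centerMass_mem_convexHull
      (fun i _ => by fin_cases i <;> simp [w] <;> positivity) (by rw [hw]; norm_num)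
      (fun i _ => by fin_cases i <;> simp [z])
  rw [Finset.centerMass_eq_of_sum_1 _ _ hw]
  simp only [Fin.sum_univ_four, Matrix.cons_val_zero, Matrix.cons_val_one, Matrix.cons_val,
    Prod.smul_mk, smul_eq_mul, Prod.mk_add_mk, Prod.mk.injEq, w, z]
  constructor <;> ring

theorem mem_extremePoints_of_forall_linear_le {C : Set (ℝ × ℝ)} {q : ℝ × ℝ} (a b : ℝ)
    (hq : q ∈ C)
    (h : ∀ p ∈ C, a * p.1 + b * p.2 ≤ a * q.1 + b * q.2 ∧
      (a * q.1 + b * q.2 ≤ a * p.1 + b * p.2 → p = q)) :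
    q ∈ C.extremePoints ℝ :=
  exposedPoints_subset_extremePoints
    ⟨hq, a • ContinuousLinearMap.fst ℝ ℝ ℝ + b • ContinuousLinearMap.snd ℝ ℝ ℝ, by simpa using h⟩

theorem extremePoints_h4Par :
    H4Par.extremePoints ℝ = {(0, 1/2), (1/3, 1/6), (2/3, 1/6), (1/3, 1/2)} := by
  refine subset_antisymm (h4Par_eq_convexHull ▸ extremePoints_convexHull_subset) ?_
  -- Each vertex is the unique maximizer on `H4Par` of the sum of the outer normals of its edges.
  rintro q (rfl | rfl | rfl | rfl | rfl)
  · refine mem_extremePoints_of_forall_linear_le (-1) 1 (by norm_num [H4Par]) ?_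
    rintro ⟨x, y⟩ ⟨hx0, hx1, hy0, hy1, hxy0, hxy1⟩
    exact ⟨by linarith, fun h => Prod.ext (by linarith) (by linarith)⟩
  · refine mem_extremePoints_of_forall_linear_le (-1) (-2) (by norm_num [H4Par]) ?_
    rintro ⟨x, y⟩ ⟨hx0, hx1, hy0, hy1, hxy0, hxy1⟩
    exact ⟨by linarith, fun h => Prod.ext (by linarith) (by linarith)⟩
  · refine mem_extremePoints_of_forall_linear_le 1 (-1) (by norm_num [H4Par]) ?_
    rintro ⟨x, y⟩ ⟨hx0, hx1, hy0, hy1, hxy0, hxy1⟩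
    exact ⟨by linarith, fun h => Prod.ext (by linarith) (by linarith)⟩
  · refine mem_extremePoints_of_forall_linear_le 1 2 (by norm_num [H4Par]) ?_
    rintro ⟨x, y⟩ ⟨hx0, hx1, hy0, hy1, hxy0, hxy1⟩
    exact ⟨by linarith, fun h => Prod.ext (by linarith) (by linarith)⟩

/-- The state space of H₄(19) is affinely parametrized by `(x, y) = (s 6, s 8)` over
the parallelogram {0 ≤ x ≤ 2/3, 1/6 ≤ y ≤ 1/2, 1/2 ≤ x+y ≤ 5/6}; in particular it has
exactly 4 extreme points (0,1/2), (1/3,1/6), (2/3,1/6), (1/3,1/2). -/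
theorem H4_state_space :
    (∀ s : ℕ → ℝ, H4IsState s →
      (s 6, s 8) ∈ H4Par ∧ ∀ a ∈ Finset.Icc 1 19, s a = H4StateOf (s 6) (s 8) a) ∧
    (∀ p ∈ H4Par, H4IsState (H4StateOf p.1 p.2)) ∧
    Set.extremePoints ℝ H4Par =
      {(0, 1/2), (1/3, 1/6), (2/3, 1/6), (1/3, 1/2)} := by
  refine ⟨fun s hs => ?_, fun p hp => h4IsState_h4StateOf_iff.2 hp, extremePoints_h4Par⟩
  have hs_eq := eq_h4StateOf_of_forall_sum_eq_one hs.2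
  exact ⟨h4StateOf_nonneg_iff.1 fun a ha => hs_eq a ha ▸ hs.1 a ha, hs_eq⟩
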